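/- arXiv:2302.00628 — 6 statements merged into one kernel-verified Lean document; each statement's English description precedes it below -/
import Mathlib

section
/- For every λ ∈ (0,∞), the precision equals α_λ(P‖P̂) = min(1, λ) − D_λ^PR(P‖P̂); that is, ∫ min(λ p(x), p̂(x)) dμ(x) = min(1, λ) − ∫ p̂(x) (max(λ p(x)/p̂(x), 1) − max(λ, 1)) dμ(x). -/
/-!
Pointwise, `min (λp) p̂ = λp + p̂ - max (λp) p̂`, and where `p̂ > 0` the integrand of the
PR-divergence is `max (λp) p̂ - max λ 1 * p̂`. Integrating both against `μ` leaves
`λ + 1 - ∫ max (λp) p̂` on the one side and `min 1 λ - (∫ max (λp) p̂ - max λ 1)` on the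
other, and these agree because `min 1 λ + max 1 λ = 1 + λ`.
-/

open MeasureTheory

theorem mul_max_mul_div_one_sub {a c m q : ℝ} (hq : 0 < q) :
    q * (max (c * (a / q)) 1 - m) = max (c * a) q - m * q := by
  rw [mul_sub, mul_comm q, max_mul_of_nonneg _ _ hq.le, one_mul, mul_comm m,
    mul_assoc, div_mul_cancel₀ a hq.ne']

theorem integral_inf_add_integral_sup {X : Type*} [MeasurableSpace X] {μ : Measure X}
    {f g : X → ℝ} (hf : Integrable f μ) (hg : Integrable g μ) :
    ∫ x, min (f x) (g x) ∂μ + ∫ x, max (f x) (g x) ∂μ = ∫ x, f x ∂μ + ∫ x, g x ∂μ := by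
  have hmin : Integrable (fun x => min (f x) (g x)) μ := hf.inf hg
  have hmax : Integrable (fun x => max (f x) (g x)) μ := hf.sup hg
  rw [← integral_add hmin hmax, ← integral_add hf hg]
  exact integral_congr_ae (Filter.Eventually.of_forall fun x => min_add_max (f x) (g x))

theorem precision_eq_min_sub_PRdiv_general
    {X : Type*} [MeasurableSpace X] (μ : Measure X)
    (p phat : X → ℝ)
    (hpint : ∫ x, p x ∂μ = 1) (hphatint : ∫ x, phat x ∂μ = 1)
    (hphatpos : ∀ᵐ x ∂μ, 0 < phat x)
    (lam : ℝ) :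
    ∫ x, min (lam * p x) (phat x) ∂μ =
      min 1 lam -
        ∫ x, phat x * (max (lam * (p x / phat x)) 1 - max lam 1) ∂μ := by
  have hpI : Integrable p μ := .of_integral_ne_zero (by simp [hpint])
  have hphatI : Integrable phat μ := .of_integral_ne_zero (by simp [hphatint])
  have hdiv : ∫ x, phat x * (max (lam * (p x / phat x)) 1 - max lam 1) ∂μ =
      ∫ x, max (lam * p x) (phat x) ∂μ - max lam 1 := by
    have hmax : Integrable (fun x => max (lam * p x) (phat x)) μ :=
      (hpI.const_mul lam).sup hphatI
    rw [integral_congr_ae (hphatpos.mono fun x hx => mul_max_mul_div_one_sub hx),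
      integral_sub hmax (hphatI.const_mul _),
      integral_const_mul, hphatint, mul_one]
  have hsplit := integral_inf_add_integral_sup (hpI.const_mul lam) hphatI
  rw [integral_const_mul, hpint, hphatint] at hsplit
  rw [hdiv, max_comm]
  linarith [min_add_max 1 lam]

/-- Precision as a function of the PR-divergence:
`α_λ(P‖P̂) = min(1, λ) − D_λ^PR(P‖P̂)`. -/
theorem precision_eq_min_sub_PRdiv
    {X : Type*} [MeasurableSpace X] (μ : Measure X) [SigmaFinite μ]
    (p phat : X → ℝ) (hp : Measurable p) (hphat : Measurable phat)
    (hp0 : ∀ x, 0 ≤ p x) (hphat0 : ∀ x, 0 ≤ phat x)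
    (hpint : ∫ x, p x ∂μ = 1) (hphatint : ∫ x, phat x ∂μ = 1)
    (hphatpos : ∀ᵐ x ∂μ, 0 < phat x)
    (lam : ℝ) (hlam : 0 < lam) :
    ∫ x, min (lam * p x) (phat x) ∂μ =
      min 1 lam -
        ∫ x, phat x * (max (lam * (p x / phat x)) 1 - max lam 1) ∂μ :=
  precision_eq_min_sub_PRdiv_general μ p phat hpint hphatint hphatpos lam
end

section
/- For every λ ∈ (0,∞) and every t ∈ [0, λ], the convex conjugate of f_λ satisfies f_λ*(t) := sup_{u ≥ 0} (t·u − f_λ(u)) = t/λ + max(λ, 1) − 1; in particular f_λ*(t) = t/λ when λ ≤ 1 and f_λ*(t) = t/λ + λ − 1 when λ > 1. -/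
/-!
Writing `t = s λ` with `s ∈ [0, 1]`, the quantity `t u + (1 - s)` is a convex combination of
`λ u` and `1`, hence at most `max (λ u) 1`. So `t u - f_λ(u) ≤ t/λ + max(λ, 1) - 1` for every `u`,
with equality at the kink `u = 1/λ`.
-/

lemma mul_sub_max_mul_one_le {lam t : ℝ} (hlam : 0 < lam) (ht₀ : 0 ≤ t) (htl : t ≤ lam) (u : ℝ) :
    t * u - max (lam * u) 1 ≤ t / lam - 1 := by
  set s := t / lam with hs
  have hs₀ : 0 ≤ s := div_nonneg ht₀ hlam.le
  have hs₁ : s ≤ 1 := (div_le_one hlam).mpr htl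
  have hts : t = s * lam := by rw [hs, div_mul_cancel₀ _ hlam.ne']
  have hcombo : s * (lam * u) + (1 - s) * 1 ≤ max (lam * u) 1 := by
    nlinarith [le_max_left (lam * u) 1, le_max_right (lam * u) 1]
  rw [hts]
  linarith

lemma isGreatest_mul_sub_max_mul_one {lam t : ℝ} (hlam : 0 < lam) (ht : t ∈ Set.Icc 0 lam)
    (c : ℝ) :
    IsGreatest ((fun u => t * u - (max (lam * u) 1 - c)) '' Set.Ici 0) (t / lam + c - 1) := by
  refine ⟨⟨1 / lam, Set.mem_Ici.mpr (by positivity), ?_⟩, ?_⟩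
  · simp only [mul_one_div_cancel hlam.ne', max_self]
    ring
  · rintro _ ⟨u, -, rfl⟩
    linarith [mul_sub_max_mul_one_le hlam ht.1 ht.2 u]

/-- The convex conjugate of `f_λ(u) = max(λu, 1) − max(λ, 1)` on `[0, λ]`:
`f_λ*(t) = t/λ + max(λ, 1) − 1`; in particular `f_λ*(t) = t/λ` if `λ ≤ 1`
and `f_λ*(t) = t/λ + λ − 1` if `λ > 1`. -/
theorem fenchel_conjugate_PR
    (lam : ℝ) (hlam : 0 < lam) (t : ℝ) (ht : t ∈ Set.Icc 0 lam) :
    sSup ((fun u => t * u - (max (lam * u) 1 - max lam 1)) '' Set.Ici 0) =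
      t / lam + max lam 1 - 1 ∧
    (lam ≤ 1 →
      sSup ((fun u => t * u - (max (lam * u) 1 - max lam 1)) '' Set.Ici 0) =
        t / lam) ∧
    (1 < lam →
      sSup ((fun u => t * u - (max (lam * u) 1 - max lam 1)) '' Set.Ici 0) =
        t / lam + lam - 1) := by
  have key := (isGreatest_mul_sub_max_mul_one hlam ht (max lam 1)).csSup_eq
  refine ⟨key, fun h => ?_, fun h => ?_⟩
  · rw [key, max_eq_right h]
    ring
  · rw [key, max_eq_left h.le]
end

section
/- Let f : (0,∞) → ℝ be twice continuously differentiable with f(1) = 0, and suppose there exist constants 0 < m ≤ 1 ≤ M < ∞ such that m ≤ p̂(x)/p(x) ≤ M for μ-a.e. x. Then the f-divergence decomposes as a weighted integral of PR-divergences: ∫ p̂(x) f(p(x)/p̂(x)) dμ(x) = ∫_m^M (1/λ³) f''(1/λ) · D_λ^PR(P‖P̂) dλ. -/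
/-!
Substituting `t = 1/λ` turns `λ⁻³ f''(1/λ) f_λ(r)` into `f''(t) ((r - t)⁺ - (1 - t)⁺)`, so by
Taylor's formula with integral remainder the `λ`-integral over `[m, M]` equals
`f r - f 1 - f'(1/M) (r - 1)` for every `r ∈ [1/M, 1/m]`. Taking `r = p/p̂`, multiplying by `p̂` and
integrating in `x` gives the theorem after swapping the integrals (legitimate because
`|p̂ f_λ(p/p̂)| ≤ λ |p - p̂|`): the linear term integrates to `f'(1/M) (∫ p - ∫ p̂) = 0`.
-/

open MeasureTheory Set

section SecondDerivative

variable {f : ℝ → ℝ} {s : Set ℝ}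

theorem ContDiffOn.contDiffOn_one_deriv (hs : IsOpen s) (hf : ContDiffOn ℝ 2 f s) :
    ContDiffOn ℝ 1 (deriv f) s :=
  hf.deriv_of_isOpen hs (by norm_num)

theorem ContDiffOn.continuousOn_deriv_deriv (hs : IsOpen s) (hf : ContDiffOn ℝ 2 f s) :
    ContinuousOn (deriv (deriv f)) s :=
  (hf.contDiffOn_one_deriv hs).continuousOn_deriv_of_isOpen hs le_rfl

theorem ContDiffOn.hasDerivAt_deriv (hs : IsOpen s) (hf : ContDiffOn ℝ 2 f s) {t : ℝ}
    (ht : t ∈ s) : HasDerivAt (deriv f) (deriv (deriv f) t) t :=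
  (((hf.contDiffOn_one_deriv hs).differentiableOn one_ne_zero).differentiableAt
    (hs.mem_nhds ht)).hasDerivAt

theorem integral_sub_mul_deriv_deriv (hs : IsOpen s) (hf : ContDiffOn ℝ 2 f s) {a r : ℝ}
    (har : uIcc a r ⊆ s) :
    ∫ t in a..r, (r - t) * deriv (deriv f) t = f r - f a - deriv f a * (r - a) := by
  rw [intervalIntegral.integral_mul_deriv_eq_deriv_mul (u := fun t => r - t) (u' := fun _ => -1)
      (fun t _ => (hasDerivAt_id t).const_sub r) (fun t ht => hf.hasDerivAt_deriv hs (har ht))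
      intervalIntegrable_const ((hf.continuousOn_deriv_deriv hs).mono har).intervalIntegrable,
    intervalIntegral.integral_const_mul,
    intervalIntegral.integral_eq_sub_of_hasDerivAt
      (fun t ht => ((hf.differentiableOn (by norm_num)).differentiableAt
        (hs.mem_nhds (har ht))).hasDerivAt)
      ((hf.contDiffOn_one_deriv hs).continuousOn.mono har).intervalIntegrable]
  ring

theorem integral_deriv_deriv_mul_max_sub_zero (hs : IsOpen s) (hf : ContDiffOn ℝ 2 f s)
    {a b c : ℝ} (hab : Icc a b ⊆ s) (hac : a ≤ c) (hcb : c ≤ b) :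
    ∫ t in a..b, deriv (deriv f) t * max (c - t) 0 = f c - f a - deriv f a * (c - a) := by
  have hcont : ContinuousOn (fun t => deriv (deriv f) t * max (c - t) 0) (Icc a b) :=
    ((hf.continuousOn_deriv_deriv hs).mono hab).mul (by fun_prop)
  have hint : ∀ {u v}, a ≤ u → v ≤ b → u ≤ v →
      IntervalIntegrable (fun t => deriv (deriv f) t * max (c - t) 0) volume u v :=
    fun hu hv huv =>
      (hcont.mono (by rw [uIcc_of_le huv]; exact Icc_subset_Icc hu hv)).intervalIntegrable
  have hleft : EqOn (fun t => deriv (deriv f) t * max (c - t) 0)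
      (fun t => (c - t) * deriv (deriv f) t) (uIcc a c) := fun t ht => by
    rw [uIcc_of_le hac] at ht
    simp only [max_eq_left (sub_nonneg.2 ht.2), mul_comm]
  have hright : EqOn (fun t => deriv (deriv f) t * max (c - t) 0) 0 (uIcc c b) := fun t ht => by
    rw [uIcc_of_le hcb] at ht
    simp [max_eq_right (sub_nonpos.2 ht.1)]
  rw [← intervalIntegral.integral_add_adjacent_intervals (hint le_rfl hcb hac)
      (hint hac le_rfl hcb), intervalIntegral.integral_congr hleft,
    intervalIntegral.integral_congr hright, integral_sub_mul_deriv_deriv hs hf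
      ((uIcc_of_le hac).trans_subset ((Icc_subset_Icc le_rfl hcb).trans hab))]
  simp

theorem integral_deriv_deriv_mul_max_sub_max (hs : IsOpen s) (hf : ContDiffOn ℝ 2 f s)
    {a b r : ℝ} (hab : Icc a b ⊆ s) (ha1 : a ≤ 1) (h1b : 1 ≤ b) (har : a ≤ r) (hrb : r ≤ b) :
    ∫ t in a..b, deriv (deriv f) t * (max r t - max 1 t) = f r - f 1 - deriv f a * (r - 1) := by
  have hcont : ∀ c, ContinuousOn (fun t => deriv (deriv f) t * max (c - t) 0) (uIcc a b) :=
    fun c => ((hf.continuousOn_deriv_deriv hs).mono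
      ((uIcc_of_le (ha1.trans h1b)).trans_subset hab)).mul (by fun_prop)
  have hmax : ∀ c t : ℝ, max c t = max (c - t) 0 + t := fun c t => by
    rw [← max_add_add_right, sub_add_cancel, zero_add]
  simp only [hmax r, hmax 1, add_sub_add_right_eq_sub, mul_sub]
  rw [intervalIntegral.integral_sub (hcont r).intervalIntegrable (hcont 1).intervalIntegrable,
    integral_deriv_deriv_mul_max_sub_zero hs hf hab har hrb,
    integral_deriv_deriv_mul_max_sub_zero hs hf hab ha1 h1b]
  ring

end SecondDerivative

theorem integral_comp_inv_div_sq {G : ℝ → ℝ} (hG : ContinuousOn G (Ioi 0)) {a b : ℝ}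
    (ha : 0 < a) (hb : 0 < b) :
    ∫ x in a..b, G x⁻¹ / x ^ 2 = ∫ t in b⁻¹..a⁻¹, G t := by
  have hpos : uIcc a b ⊆ Ioi 0 := fun x hx => lt_of_lt_of_le (lt_min ha hb) hx.1
  have hsubst := intervalIntegral.integral_comp_mul_deriv' (f := fun x => x⁻¹) (g := G)
    (fun x hx => hasDerivAt_inv (hpos hx).ne')
    (((continuousOn_id.pow 2).inv₀ fun x hx => pow_ne_zero 2 (hpos hx).ne').neg)
    (hG.mono (by rintro _ ⟨x, hx, rfl⟩; exact inv_pos.2 (mem_Ioi.1 (hpos hx))))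
  rw [intervalIntegral.integral_symm a⁻¹, ← hsubst, ← intervalIntegral.integral_neg]
  simp [div_eq_mul_inv]

def prFun (lam u : ℝ) : ℝ := max (lam * u) 1 - max lam 1

theorem prFun_eq_mul_max_inv_sub {lam : ℝ} (hlam : 0 < lam) (u : ℝ) :
    prFun lam u = lam * (max u lam⁻¹ - max 1 lam⁻¹) := by
  rw [prFun, mul_sub, mul_max_of_nonneg _ _ hlam.le, mul_max_of_nonneg _ _ hlam.le,
    mul_inv_cancel₀ hlam.ne', mul_one]

theorem continuous_prFun : Continuous fun q : ℝ × ℝ => prFun q.1 q.2 := by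
  unfold prFun
  fun_prop

theorem abs_mul_prFun_div_le (lam a b : ℝ) : |b * prFun lam (a / b)| ≤ |lam| * |a - b| := by
  rcases eq_or_ne b 0 with rfl | hb
  · simp only [zero_mul, abs_zero, sub_zero]
    positivity
  calc |b * prFun lam (a / b)| ≤ |b| * |lam * (a / b) - lam * 1| := by
        rw [abs_mul, mul_one]
        exact mul_le_mul_of_nonneg_left (abs_max_sub_max_le_abs _ _ _) (abs_nonneg b)
    _ = |lam| * |a - b| := by
        rw [← abs_mul, ← abs_mul]
        congr 1
        field_simp

noncomputable def prWeight (f : ℝ → ℝ) (lam : ℝ) : ℝ := 1 / lam ^ 3 * deriv (deriv f) (1 / lam)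

theorem continuousOn_prWeight {f : ℝ → ℝ} (hf : ContDiffOn ℝ 2 f (Ioi 0)) :
    ContinuousOn (prWeight f) (Ioi 0) :=
  (continuousOn_const.div (continuousOn_id.pow 3) fun _ h => (pow_pos h 3).ne').mul
    ((hf.continuousOn_deriv_deriv isOpen_Ioi).comp
      (continuousOn_const.div continuousOn_id fun _ h => ne_of_gt h)
      fun _ h => one_div_pos.2 (mem_Ioi.1 h))

theorem integral_prWeight_mul_prFun {f : ℝ → ℝ} (hf : ContDiffOn ℝ 2 f (Ioi 0)) {m M r : ℝ}
    (hm : 0 < m) (hm1 : m ≤ 1) (hM1 : 1 ≤ M) (hMr : M⁻¹ ≤ r) (hrm : r ≤ m⁻¹) :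
    ∫ lam in m..M, prWeight f lam * prFun lam r = f r - f 1 - deriv f M⁻¹ * (r - 1) := by
  have hM : 0 < M := hm.trans_le (hm1.trans hM1)
  set G : ℝ → ℝ := fun t => deriv (deriv f) t * (max r t - max 1 t)
  have hG : ContinuousOn G (Ioi 0) := (hf.continuousOn_deriv_deriv isOpen_Ioi).mul (by fun_prop)
  have hEq : EqOn (fun lam => prWeight f lam * prFun lam r)
      (fun lam => G lam⁻¹ / lam ^ 2) (uIcc m M) := fun lam hlam => by
    have hlam : 0 < lam := lt_of_lt_of_le (lt_min hm hM) hlam.1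
    simp only [G, prWeight, prFun_eq_mul_max_inv_sub hlam, one_div]
    field_simp
  rw [intervalIntegral.integral_congr hEq, integral_comp_inv_div_sq hG hm hM,
    integral_deriv_deriv_mul_max_sub_max isOpen_Ioi hf
      (fun t ht => (inv_pos.2 hM).trans_le ht.1) (inv_le_one_of_one_le₀ hM1)
      ((one_le_inv₀ hm).2 hm1) hMr hrm]

theorem integral_prWeight_mul_mul_prFun_div {f : ℝ → ℝ} (hf : ContDiffOn ℝ 2 f (Ioi 0))
    (hf1 : f 1 = 0) {m M a b : ℝ} (hm : 0 < m) (hm1 : m ≤ 1) (hM1 : 1 ≤ M)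
    (hmba : m ≤ b / a) (hbaM : b / a ≤ M) :
    ∫ lam in m..M, prWeight f lam * (b * prFun lam (a / b)) =
      b * f (a / b) - deriv f M⁻¹ * (a - b) := by
  have hba : 0 < b / a := hm.trans_le hmba
  have hb : b ≠ 0 := fun h => by simp [h] at hba
  have hMab : M⁻¹ ≤ a / b := inv_div b a ▸ inv_anti₀ hba hbaM
  have habm : a / b ≤ m⁻¹ := inv_div b a ▸ inv_anti₀ hm hmba
  simp only [mul_left_comm (prWeight f _), intervalIntegral.integral_const_mul,
    integral_prWeight_mul_prFun hf hm hm1 hM1 hMab habm, hf1, sub_zero]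
  field_simp

theorem integrable_prod_mul_prFun {X : Type*} [MeasurableSpace X] {μ : Measure X}
    {p phat : X → ℝ} (hp : Integrable p μ) (hphat : Integrable phat μ) {w : ℝ → ℝ} {m M : ℝ}
    (hw : ContinuousOn w (Icc m M)) :
    Integrable (Function.uncurry fun lam x => w lam * (phat x * prFun lam (p x / phat x)))
      ((volume.restrict (Ioc m M)).prod μ) := by
  obtain ⟨C, hC⟩ := isCompact_Icc.exists_bound_of_continuousOn (hw.mul continuousOn_id)
  refine Integrable.mono'
    ((integrableOn_const (C := C) measure_Ioc_lt_top.ne).mul_prod (hp.sub hphat).abs) ?_ ?_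
  · exact ((hw.mono Ioc_subset_Icc_self).aestronglyMeasurable measurableSet_Ioc).comp_fst.mul
      (hphat.1.comp_snd.mul (continuous_prFun.comp_aestronglyMeasurable
        (measurable_fst.aestronglyMeasurable.prodMk (hp.1.comp_snd.div₀ hphat.1.comp_snd))))
  · filter_upwards [Measure.quasiMeasurePreserving_fst.ae (ae_restrict_mem measurableSet_Ioc)]
      with z hz
    have hwz : |w z.1 * z.1| ≤ C := hC z.1 (Ioc_subset_Icc_self hz)
    calc ‖w z.1 * (phat z.2 * prFun z.1 (p z.2 / phat z.2))‖
        ≤ |w z.1| * (|z.1| * |p z.2 - phat z.2|) := by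
          rw [Real.norm_eq_abs, abs_mul]
          gcongr
          exact abs_mul_prFun_div_le _ _ _
      _ ≤ C * |(p - phat) z.2| := by
          rw [← mul_assoc, ← abs_mul, Pi.sub_apply]
          gcongr

theorem fdiv_eq_weighted_integral_PRdiv_general
    {X : Type*} [MeasurableSpace X] (μ : Measure X) [SigmaFinite μ]
    (p phat : X → ℝ)
    (hpint : ∫ x, p x ∂μ = 1) (hphatint : ∫ x, phat x ∂μ = 1)
    (f : ℝ → ℝ) (hf : ContDiffOn ℝ 2 f (Set.Ioi 0)) (hf1 : f 1 = 0)
    (m M : ℝ) (hm : 0 < m) (hm1 : m ≤ 1) (hM1 : 1 ≤ M)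
    (hratio : ∀ᵐ x ∂μ, m ≤ phat x / p x ∧ phat x / p x ≤ M) :
    ∫ x, phat x * f (p x / phat x) ∂μ =
      ∫ lam in m..M,
        (1 / lam ^ 3) * deriv (deriv f) (1 / lam) *
          ∫ x, phat x * (max (lam * (p x / phat x)) 1 - max lam 1) ∂μ := by
  have hmM : m ≤ M := hm1.trans hM1
  have hpInt : Integrable p μ := .of_integral_ne_zero (by simp [hpint])
  have hphatInt : Integrable phat μ := .of_integral_ne_zero (by simp [hphatint])
  have hF := integrable_prod_mul_prFun hpInt hphatInt
    ((continuousOn_prWeight hf).mono fun _ h => hm.trans_le h.1 : ContinuousOn _ (Icc m M))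
  have hinner : ∀ᵐ x ∂μ, ∫ lam in Ioc m M, prWeight f lam * (phat x * prFun lam (p x / phat x)) =
      phat x * f (p x / phat x) - deriv f M⁻¹ * (p x - phat x) := by
    filter_upwards [hratio] with x ⟨hmx, hxM⟩
    rw [← intervalIntegral.integral_of_le hmM]
    exact integral_prWeight_mul_mul_prFun_div hf hf1 hm hm1 hM1 hmx hxM
  have hlin : ∫ x, deriv f M⁻¹ * (p x - phat x) ∂μ = 0 := by
    rw [integral_const_mul, integral_sub hpInt hphatInt, hpint, hphatint, sub_self, mul_zero]
  calc ∫ x, phat x * f (p x / phat x) ∂μ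
      = ∫ x, (∫ lam in Ioc m M, prWeight f lam * (phat x * prFun lam (p x / phat x))) +
          deriv f M⁻¹ * (p x - phat x) ∂μ :=
        integral_congr_ae (hinner.mono fun x hx => by simp only [hx, sub_add_cancel])
    _ = ∫ x, (∫ lam in Ioc m M, prWeight f lam * (phat x * prFun lam (p x / phat x))) ∂μ := by
        rw [integral_add (by exact hF.integral_prod_right)
          (by exact (hpInt.sub hphatInt).const_mul _), hlin, add_zero]
    _ = ∫ lam in Ioc m M, (∫ x, prWeight f lam * (phat x * prFun lam (p x / phat x)) ∂μ) :=
        (integral_integral_swap hF).symm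
    _ = _ := by
        simp only [integral_const_mul, intervalIntegral.integral_of_le hmM]
        rfl

/-- Any (twice continuously differentiable) `f`-divergence decomposes as a weighted
integral of PR-divergences:
`D_f(P‖P̂) = ∫_m^M (1/λ³) f''(1/λ) · D_λ^PR(P‖P̂) dλ`. -/
theorem fdiv_eq_weighted_integral_PRdiv
    {X : Type*} [MeasurableSpace X] (μ : Measure X) [SigmaFinite μ]
    (p phat : X → ℝ) (hp : Measurable p) (hphat : Measurable phat)
    (hp0 : ∀ x, 0 ≤ p x) (hphat0 : ∀ x, 0 ≤ phat x)
    (hpint : ∫ x, p x ∂μ = 1) (hphatint : ∫ x, phat x ∂μ = 1)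
    (hppos : ∀ᵐ x ∂μ, 0 < p x) (hphatpos : ∀ᵐ x ∂μ, 0 < phat x)
    (f : ℝ → ℝ) (hf : ContDiffOn ℝ 2 f (Set.Ioi 0)) (hf1 : f 1 = 0)
    (m M : ℝ) (hm : 0 < m) (hm1 : m ≤ 1) (hM1 : 1 ≤ M)
    (hratio : ∀ᵐ x ∂μ, m ≤ phat x / p x ∧ phat x / p x ≤ M) :
    ∫ x, phat x * f (p x / phat x) ∂μ =
      ∫ lam in m..M,
        (1 / lam ^ 3) * deriv (deriv f) (1 / lam) *
          ∫ x, phat x * (max (lam * (p x / phat x)) 1 - max lam 1) ∂μ :=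
  fdiv_eq_weighted_integral_PRdiv_general μ p phat hpint hphatint f hf hf1 m M hm hm1 hM1 hratio
end

section
/- Let c : (0,∞) → ℝ be twice continuously differentiable, and let 0 < u_min ≤ 1 ≤ u_max < ∞. Then for every u ∈ [u_min, u_max], ∫_{1/u_max}^{1/u_min} c''(λ) · (max(λu, 1) − max(λ, 1)) dλ = (c'(1/u_min)·(1/u_min) − c(1/u_min))·(u − 1) + u·c(1/u) − c(1). -/
/-!
Since `max a 1 = 1 + (a - 1)⁺`, the weight is the difference of two hinges `(uλ - 1)⁺ - (λ - 1)⁺`,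
with kinks at `1/u` and `1`, both inside `[1/u_max, 1/u_min]`. Against a hinge `(sλ - 1)⁺` the
integral of `c''` only sees the part right of the kink, where two integrations by parts give
`c'(b)(sb - 1) - s c(b) + s c(1/s)`. Subtracting the two hinge values yields the formula.
-/

open MeasureTheory Set

section SecondDerivative

variable {c : ℝ → ℝ} {U : Set ℝ} {a b : ℝ}

lemma ContDiffOn.continuousOn_deriv_deriv_s8 (hc : ContDiffOn ℝ 2 c U) (hU : IsOpen U) :
    ContinuousOn (deriv (deriv c)) U :=
  (hc.deriv_of_isOpen hU (m := 1) (by norm_num)).continuousOn_deriv_of_isOpen hU le_rfl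

lemma ContDiffOn.intervalIntegrable_deriv_deriv_mul (hc : ContDiffOn ℝ 2 c U) (hU : IsOpen U)
    {g : ℝ → ℝ} (hg : Continuous g) (hab : uIcc a b ⊆ U) :
    IntervalIntegrable (fun x => deriv (deriv c) x * g x) volume a b :=
  ((hc.continuousOn_deriv_deriv_s8 hU).mono hab |>.mul hg.continuousOn).intervalIntegrable

lemma ContDiffOn.integral_deriv_deriv_mul_affine (hc : ContDiffOn ℝ 2 c U) (hU : IsOpen U)
    (hab : uIcc a b ⊆ U) (s t : ℝ) :
    ∫ x in a..b, deriv (deriv c) x * (s * x + t) =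
      (deriv c b * (s * b + t) - s * c b) - (deriv c a * (s * a + t) - s * c a) := by
  refine intervalIntegral.integral_eq_sub_of_hasDerivAt
    (f := fun x => deriv c x * (s * x + t) - s * c x) (fun x hx => ?_)
    (hc.intervalIntegrable_deriv_deriv_mul hU (g := fun x => s * x + t) (by fun_prop) hab)
  have hxU : U ∈ nhds x := hU.mem_nhds (hab hx)
  have hc' : HasDerivAt c (deriv c x) x :=
    ((hc.differentiableOn (by norm_num)).differentiableAt hxU).hasDerivAt
  have hc'' : HasDerivAt (deriv c) (deriv (deriv c) x) x :=
    (((hc.deriv_of_isOpen hU (m := 1) (by norm_num)).differentiableOn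
      (by norm_num)).differentiableAt hxU).hasDerivAt
  exact ((hc''.mul (((hasDerivAt_id' x).const_mul s).add_const t)).sub
    (hc'.const_mul s)).congr_deriv (by ring)

lemma ContDiffOn.integral_deriv_deriv_mul_hinge (hc : ContDiffOn ℝ 2 c U) (hU : IsOpen U)
    (hab : Icc a b ⊆ U) {s : ℝ} (hs : 0 < s) (has : a ≤ s⁻¹) (hsb : s⁻¹ ≤ b) :
    ∫ x in a..b, deriv (deriv c) x * max (s * x - 1) 0 =
      deriv c b * (s * b - 1) - s * c b + s * c s⁻¹ := by
  have hint {p q : ℝ} (hp : a ≤ p) (hq : q ≤ b) (hpq : p ≤ q) :=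
    hc.intervalIntegrable_deriv_deriv_mul hU (g := fun x => max (s * x - 1) 0) (by fun_prop)
      ((uIcc_of_le hpq).trans_subset ((Icc_subset_Icc hp hq).trans hab))
  rw [← intervalIntegral.integral_add_adjacent_intervals (hint le_rfl hsb has)
    (hint has le_rfl hsb)]
  have below : ∫ x in a..s⁻¹, deriv (deriv c) x * max (s * x - 1) 0 = 0 := by
    refine (intervalIntegral.integral_congr (g := fun _ => 0) fun x hx => ?_).trans (by simp)
    rw [uIcc_of_le has] at hx
    have : s * x ≤ 1 := by simpa [← le_div_iff₀' hs] using hx.2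
    simp [max_eq_right (sub_nonpos.2 this)]
  have above : ∫ x in s⁻¹..b, deriv (deriv c) x * max (s * x - 1) 0 =
      ∫ x in s⁻¹..b, deriv (deriv c) x * (s * x + -1) := by
    refine intervalIntegral.integral_congr fun x hx => ?_
    rw [uIcc_of_le hsb] at hx
    have : 1 ≤ s * x := by simpa [← div_le_iff₀' hs] using hx.1
    rw [max_eq_left (sub_nonneg.2 this), sub_eq_add_neg]
  rw [below, above, hc.integral_deriv_deriv_mul_affine hU
    ((uIcc_of_le hsb).trans_subset ((Icc_subset_Icc has le_rfl).trans hab))]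
  field_simp
  ring

end SecondDerivative

/-- For `c` twice continuously differentiable on `(0,∞)` and
`0 < u_min ≤ 1 ≤ u_max`, for every `u ∈ [u_min, u_max]`,
`∫_{1/u_max}^{1/u_min} c''(λ) (max(λu,1) − max(λ,1)) dλ
  = (c'(1/u_min)·(1/u_min) − c(1/u_min))·(u − 1) + u·c(1/u) − c(1)`. -/
theorem weighted_integral_PR_generator
    (c : ℝ → ℝ) (hc : ContDiffOn ℝ 2 c (Set.Ioi 0))
    (umin umax : ℝ) (humin : 0 < umin) (humin1 : umin ≤ 1) (humax1 : 1 ≤ umax)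
    (u : ℝ) (hu : u ∈ Set.Icc umin umax) :
    ∫ lam in (1 / umax)..(1 / umin),
        deriv (deriv c) lam * (max (lam * u) 1 - max lam 1) =
      (deriv c (1 / umin) * (1 / umin) - c (1 / umin)) * (u - 1) +
        u * c (1 / u) - c 1 := by
  obtain ⟨humin_le, hle_umax⟩ := hu
  have hu0 : 0 < u := humin.trans_le humin_le
  have hIcc : Icc (1 / umax) (1 / umin) ⊆ Ioi 0 := fun x hx =>
    lt_of_lt_of_le (by positivity) hx.1
  have huIcc : uIcc (1 / umax) (1 / umin) ⊆ Ioi 0 :=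
    (uIcc_of_le (one_div_le_one_div_of_le humin (humin1.trans humax1))).trans_subset hIcc
  have hmax_sub_max (x : ℝ) :
      max (x * u) 1 - max x 1 = max (u * x - 1) 0 - max (1 * x - 1) 0 := by
    have hshift (a : ℝ) : max (a - 1) 0 = max a 1 - 1 := by simpa using max_sub_sub_right a 1 1
    rw [hshift, hshift, mul_comm, one_mul]
    ring
  have hinge {s : ℝ} (hs : 0 < s) (hmin : umin ≤ s) (hmax : s ≤ umax) :=
    hc.integral_deriv_deriv_mul_hinge isOpen_Ioi hIcc hs
      (by simpa using one_div_le_one_div_of_le hs hmax)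
      (by simpa using one_div_le_one_div_of_le humin hmin)
  simp_rw [hmax_sub_max, mul_sub]
  rw [intervalIntegral.integral_sub, hinge hu0 humin_le hle_umax,
    hinge one_pos humin1 humax1]
  · field_simp
    ring
  all_goals
    refine hc.intervalIntegrable_deriv_deriv_mul isOpen_Ioi ?_ huIcc
    fun_prop
end

section
/- Suppose there exist constants 0 < m ≤ 1 ≤ M < ∞ such that m ≤ p̂(x)/p(x) ≤ M for μ-a.e. x. Then the Kullback–Leibler divergence decomposes as KL(P‖P̂) = ∫ p(x) log(p(x)/p̂(x)) dμ(x) = ∫_m^M (1/λ²) · D_λ^PR(P‖P̂) dλ. -/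
/-!
Fix `x` and put `r = p x / p̂ x`. The kinks of `λ ↦ max (λ r) 1` at `λ = 1/r = p̂/p` and of
`λ ↦ max λ 1` at `λ = 1` both lie in `[m, M]`, so the `λ`-integral is computed piecewise:
`∫_m^M λ⁻² p̂ f_λ(r) dλ = p log (p/p̂) + (p - p̂)(log M - 1)`. Since `|p̂ f_λ(p/p̂)| ≤ λ |p - p̂|`,
the integrand is dominated by `(|p| + |p̂|)/m`, so Fubini applies, and the correction term
integrates to `0` because `P` and `P̂` both have mass one.
-/

open MeasureTheory Set Real

/-- The function `f_λ` of the PR-divergence `D_λ^PR(P‖P̂) = ∫ p̂ f_λ(p/p̂) dμ`. -/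
noncomputable def prGenerator (lam u : ℝ) : ℝ := max (lam * u) 1 - max lam 1

lemma abs_prGenerator_le {lam : ℝ} (hlam : 0 ≤ lam) (u : ℝ) :
    |prGenerator lam u| ≤ lam * |u - 1| :=
  calc |prGenerator lam u| ≤ |lam * u - lam| := abs_max_sub_max_le_abs _ _ _
    _ = lam * |u - 1| := by rw [← mul_sub_one, abs_mul, abs_of_nonneg hlam]

lemma abs_mul_prGenerator_div_le {lam b : ℝ} (hlam : 0 ≤ lam) (hb : b ≠ 0) (a : ℝ) :
    |b * prGenerator lam (a / b)| ≤ lam * |a - b| :=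
  calc |b * prGenerator lam (a / b)| = |b| * |prGenerator lam (a / b)| := abs_mul _ _
    _ ≤ |b| * (lam * |a / b - 1|) := by gcongr; exact abs_prGenerator_le hlam _
    _ = lam * |b * (a / b - 1)| := by rw [abs_mul]; ring
    _ = lam * |a - b| := by rw [mul_sub_one, mul_div_cancel₀ _ hb]

lemma abs_one_div_sq_mul_prGenerator_le {m lam a b : ℝ} (hm : 0 < m) (hlam : m ≤ lam)
    (hb : b ≠ 0) : |1 / lam ^ 2 * (b * prGenerator lam (a / b))| ≤ m⁻¹ * (|a| + |b|) := by
  have hlam0 : 0 < lam := hm.trans_le hlam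
  calc |1 / lam ^ 2 * (b * prGenerator lam (a / b))|
      = 1 / lam ^ 2 * |b * prGenerator lam (a / b)| := by
        rw [abs_mul, abs_of_pos (by positivity)]
    _ ≤ 1 / lam ^ 2 * (lam * |a - b|) := by gcongr; exact abs_mul_prGenerator_div_le hlam0.le hb a
    _ = lam⁻¹ * |a - b| := by field_simp
    _ ≤ m⁻¹ * (|a| + |b|) := by gcongr; exact abs_sub _ _

lemma integral_one_div_sq {a b : ℝ} (ha : 0 < a) (hb : 0 < b) :
    ∫ l in a..b, 1 / l ^ 2 = 1 / a - 1 / b := by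
  have h := integral_zpow (n := -2) (Or.inr ⟨by norm_num, notMem_uIcc_of_lt ha hb⟩)
  norm_num at h
  simp only [one_div, h]
  ring

lemma intervalIntegrable_one_div_sq_mul_max {a b : ℝ} (ha : 0 < a) (hb : 0 < b) (r : ℝ) :
    IntervalIntegrable (fun l => 1 / l ^ 2 * max (l * r) 1) volume a b := by
  refine ContinuousOn.intervalIntegrable (ContinuousOn.mul ?_ (by fun_prop))
  exact continuousOn_const.div (continuousOn_pow 2) fun l hl =>
    pow_ne_zero 2 (ne_of_mem_of_not_mem hl (notMem_uIcc_of_lt ha hb))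

lemma integral_one_div_sq_mul_max {m M r : ℝ} (hm : 0 < m) (hr : 0 < r)
    (hmr : m * r ≤ 1) (hMr : 1 ≤ M * r) :
    ∫ l in m..M, 1 / l ^ 2 * max (l * r) 1 = 1 / m - r + r * log (M * r) := by
  have hc : 0 < r⁻¹ := inv_pos.2 hr
  have hM : 0 < M := pos_of_mul_pos_left (one_pos.trans_le hMr) hr.le
  have hcr : r⁻¹ * r = 1 := inv_mul_cancel₀ hr.ne'
  have lower : ∫ l in m..r⁻¹, 1 / l ^ 2 * max (l * r) 1 = ∫ l in m..r⁻¹, 1 / l ^ 2 := by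
    refine intervalIntegral.integral_congr fun l hl => ?_
    rw [uIcc_of_le (le_of_mul_le_mul_right (hcr ▸ hmr) hr)] at hl
    have hlr : l * r ≤ 1 := hcr ▸ mul_le_mul_of_nonneg_right hl.2 hr.le
    simp only [max_eq_right hlr, mul_one]
  have upper : ∫ l in r⁻¹..M, 1 / l ^ 2 * max (l * r) 1 = ∫ l in r⁻¹..M, r * l⁻¹ := by
    refine intervalIntegral.integral_congr fun l hl => ?_
    rw [uIcc_of_le (le_of_mul_le_mul_right (hcr ▸ hMr) hr)] at hl
    have hlr : 1 ≤ l * r := hcr ▸ mul_le_mul_of_nonneg_right hl.1 hr.le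
    have hl0 : l ≠ 0 := (hc.trans_le hl.1).ne'
    simp only [max_eq_left hlr]
    field_simp
  rw [← intervalIntegral.integral_add_adjacent_intervals
    (intervalIntegrable_one_div_sq_mul_max hm hc r) (intervalIntegrable_one_div_sq_mul_max hc hM r),
    lower, upper, integral_one_div_sq hm hc, intervalIntegral.integral_const_mul,
    integral_inv_of_pos hc hM]
  simp only [div_inv_eq_mul, one_mul]

lemma integral_one_div_sq_mul_prGenerator {m M r : ℝ} (hm : 0 < m) (hm1 : m ≤ 1) (hM1 : 1 ≤ M)
    (hr : 0 < r) (hmr : m * r ≤ 1) (hMr : 1 ≤ M * r) :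
    ∫ l in m..M, 1 / l ^ 2 * prGenerator l r = r * log r + (r - 1) * log M + (1 - r) := by
  have hM : 0 < M := hm.trans_le (hm1.trans hM1)
  have split : (fun l => 1 / l ^ 2 * prGenerator l r) =
      fun l => 1 / l ^ 2 * max (l * r) 1 - 1 / l ^ 2 * max (l * 1) 1 := by
    ext l; rw [prGenerator, mul_one, mul_sub]
  rw [split, intervalIntegral.integral_sub (intervalIntegrable_one_div_sq_mul_max hm hM r)
    (intervalIntegrable_one_div_sq_mul_max hm hM 1), integral_one_div_sq_mul_max hm hr hmr hMr,
    integral_one_div_sq_mul_max hm one_pos (by linarith) (by linarith), log_mul hM.ne' hr.ne']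
  simp only [mul_one]
  ring

lemma integral_one_div_sq_mul_prGenerator_div {m M a b : ℝ} (hm : 0 < m) (hm1 : m ≤ 1)
    (hM1 : 1 ≤ M) (ha : 0 < a) (hb : 0 < b) (hmba : m ≤ b / a) (hbaM : b / a ≤ M) :
    ∫ l in m..M, 1 / l ^ 2 * (b * prGenerator l (a / b)) =
      a * log (a / b) + (a - b) * (log M - 1) := by
  have hinv : b / a * (a / b) = 1 := by field_simp
  have hr : 0 < a / b := div_pos ha hb
  simp_rw [mul_left_comm _ b]
  rw [intervalIntegral.integral_const_mul, integral_one_div_sq_mul_prGenerator hm hm1 hM1 hr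
    (by nlinarith) (by nlinarith)]
  field_simp
  ring

section Densities

variable {X : Type*} [MeasurableSpace X] {μ : Measure X} {p phat : X → ℝ}

lemma integrable_mul_log_div_of_ratio_mem_Icc {m M : ℝ} (hm : 0 < m) (hp : Measurable p)
    (hphat : Measurable phat) (hpi : Integrable p μ) (hppos : ∀ᵐ x ∂μ, 0 < p x)
    (hphatpos : ∀ᵐ x ∂μ, 0 < phat x) (hratio : ∀ᵐ x ∂μ, m ≤ phat x / p x ∧ phat x / p x ≤ M) :
    Integrable (fun x => p x * log (p x / phat x)) μ := by
  refine (hpi.mul_const (max |log m| |log M|)).mono' (by fun_prop) ?_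
  filter_upwards [hppos, hphatpos, hratio] with x hpx hphatx ⟨hmx, hxM⟩
  have hlog : |log (p x / phat x)| ≤ max |log m| |log M| := by
    rw [← inv_div, log_inv, abs_neg]
    exact abs_le_max_abs_abs (log_le_log hm hmx) (log_le_log (div_pos hphatx hpx) hxM)
  rw [norm_mul, norm_of_nonneg hpx.le]
  exact mul_le_mul_of_nonneg_left hlog hpx.le

lemma integrable_one_div_sq_mul_prGenerator_div [SFinite μ] {m M : ℝ} (hm : 0 < m) (hmM : m ≤ M)
    (hp : Measurable p) (hphat : Measurable phat) (hpi : Integrable p μ)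
    (hphati : Integrable phat μ) (hphatpos : ∀ᵐ x ∂μ, 0 < phat x) :
    Integrable (Function.uncurry fun l x => 1 / l ^ 2 * (phat x * prGenerator l (p x / phat x)))
      ((volume.restrict (uIoc m M)).prod μ) := by
  have hmeas : Measurable (Function.uncurry fun l x =>
      1 / l ^ 2 * (phat x * prGenerator l (p x / phat x))) := by
    unfold prGenerator; fun_prop
  rw [uIoc_of_le hmM]
  refine (((hpi.abs.add hphati.abs).const_mul m⁻¹).comp_snd _).mono' hmeas.aestronglyMeasurable ?_
  filter_upwards [Measure.quasiMeasurePreserving_fst.ae (ae_restrict_mem measurableSet_Ioc),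
    Measure.quasiMeasurePreserving_snd.ae hphatpos] with ⟨l, x⟩ hl hphatx
  exact abs_one_div_sq_mul_prGenerator_le hm hl.1.le hphatx.ne'

end Densities

theorem KL_eq_weighted_integral_PRdiv_general
    {X : Type*} [MeasurableSpace X] (μ : Measure X) [SigmaFinite μ]
    (p phat : X → ℝ) (hp : Measurable p) (hphat : Measurable phat)
    (hpint : ∫ x, p x ∂μ = 1) (hphatint : ∫ x, phat x ∂μ = 1)
    (hppos : ∀ᵐ x ∂μ, 0 < p x) (hphatpos : ∀ᵐ x ∂μ, 0 < phat x)
    (m M : ℝ) (hm : 0 < m) (hm1 : m ≤ 1) (hM1 : 1 ≤ M)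
    (hratio : ∀ᵐ x ∂μ, m ≤ phat x / p x ∧ phat x / p x ≤ M) :
    ∫ x, p x * Real.log (p x / phat x) ∂μ =
      ∫ lam in m..M,
        (1 / lam ^ 2) *
          ∫ x, phat x * (max (lam * (p x / phat x)) 1 - max lam 1) ∂μ := by
  have hpi := integrable_of_integral_eq_one hpint
  have hphati := integrable_of_integral_eq_one hphatint
  symm
  calc ∫ lam in m..M, 1 / lam ^ 2 * ∫ x, phat x * prGenerator lam (p x / phat x) ∂μ
      = ∫ x, (∫ lam in m..M, 1 / lam ^ 2 * (phat x * prGenerator lam (p x / phat x))) ∂μ := by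
        simp_rw [← integral_const_mul]
        exact intervalIntegral_integral_swap (integrable_one_div_sq_mul_prGenerator_div hm
          (hm1.trans hM1) hp hphat hpi hphati hphatpos)
    _ = ∫ x, p x * log (p x / phat x) + (p x - phat x) * (log M - 1) ∂μ := by
        refine integral_congr_ae ?_
        filter_upwards [hppos, hphatpos, hratio] with x hpx hphatx ⟨hmx, hxM⟩
        exact integral_one_div_sq_mul_prGenerator_div hm hm1 hM1 hpx hphatx hmx hxM
    _ = ∫ x, p x * log (p x / phat x) ∂μ := by
        rw [integral_add (integrable_mul_log_div_of_ratio_mem_Icc hm hp hphat hpi hppos hphatpos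
          hratio) (g := fun x => (p x - phat x) * (log M - 1)) ((hpi.sub hphati).mul_const _),
          integral_mul_const, integral_sub hpi hphati,
          hpint, hphatint, sub_self, zero_mul, add_zero]

/-- The KL divergence decomposes as a weighted integral of PR-divergences:
`KL(P‖P̂) = ∫_m^M (1/λ²) · D_λ^PR(P‖P̂) dλ`. -/
theorem KL_eq_weighted_integral_PRdiv
    {X : Type*} [MeasurableSpace X] (μ : Measure X) [SigmaFinite μ]
    (p phat : X → ℝ) (hp : Measurable p) (hphat : Measurable phat)
    (hp0 : ∀ x, 0 ≤ p x) (hphat0 : ∀ x, 0 ≤ phat x)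
    (hpint : ∫ x, p x ∂μ = 1) (hphatint : ∫ x, phat x ∂μ = 1)
    (hppos : ∀ᵐ x ∂μ, 0 < p x) (hphatpos : ∀ᵐ x ∂μ, 0 < phat x)
    (m M : ℝ) (hm : 0 < m) (hm1 : m ≤ 1) (hM1 : 1 ≤ M)
    (hratio : ∀ᵐ x ∂μ, m ≤ phat x / p x ∧ phat x / p x ≤ M) :
    ∫ x, p x * Real.log (p x / phat x) ∂μ =
      ∫ lam in m..M,
        (1 / lam ^ 2) *
          ∫ x, phat x * (max (lam * (p x / phat x)) 1 - max lam 1) ∂μ :=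
  KL_eq_weighted_integral_PRdiv_general μ p phat hp hphat hpint hphatint hppos hphatpos m M hm hm1
    hM1 hratio
end

section
/- For every λ ∈ (0,∞), the discriminator T(x) defined by T(x) = λ when λ·p(x) ≥ p̂(x) and T(x) = 0 otherwise attains the PR-divergence in the dual form: ∫ p(x)T(x) dμ(x) − ∫ p̂(x)·(T(x)/λ + max(λ,1) − 1) dμ(x) = D_λ^PR(P‖P̂). -/
open MeasureTheory

namespace PRDivergence

variable {X : Type*} {lam : ℝ} {p phat : X → ℝ}

noncomputable def discriminator (lam : ℝ) (p phat : X → ℝ) (x : X) : ℝ :=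
  if phat x ≤ lam * p x then lam else 0

lemma discriminator_eq_indicator :
    discriminator lam p phat = {x | phat x ≤ lam * p x}.indicator fun _ => lam := by
  ext x
  simp [discriminator, Set.indicator_apply]

lemma abs_discriminator_le (x : X) : |discriminator lam p phat x| ≤ |lam| := by
  unfold discriminator
  split_ifs <;> simp

/-- Both sides equal `λ p(x) · 1{λ p(x) ≥ p̂(x)} - p̂(x) · max λ 1`. -/
lemma mul_discriminator_sub_eq (hlam : lam ≠ 0) {x : X} (hx : 0 < phat x) :
    p x * discriminator lam p phat x -
        phat x * (discriminator lam p phat x / lam + max lam 1 - 1) =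
      phat x * (max (lam * (p x / phat x)) 1 - max lam 1) := by
  unfold discriminator
  split_ifs with h
  · have hone : 1 ≤ lam * (p x / phat x) := by
      rw [mul_div_assoc', one_le_div hx]
      exact h
    rw [max_eq_left hone, div_self hlam]
    field_simp
    ring
  · have hone : lam * (p x / phat x) ≤ 1 := by
      rw [mul_div_assoc', div_le_one hx]
      exact (not_le.1 h).le
    rw [max_eq_right hone]
    ring

variable [MeasurableSpace X] {μ : Measure X}

lemma aestronglyMeasurable_discriminator (hp : AEMeasurable p μ) (hphat : AEMeasurable phat μ) :
    AEStronglyMeasurable (discriminator lam p phat) μ := by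
  rw [discriminator_eq_indicator]
  exact aestronglyMeasurable_const.indicator₀ (nullMeasurableSet_le hphat (hp.const_mul lam))

lemma integrable_mul_discriminator {f : X → ℝ} (hf : Integrable f μ)
    (hp : AEMeasurable p μ) (hphat : AEMeasurable phat μ) :
    Integrable (fun x => f x * discriminator lam p phat x) μ :=
  hf.mul_bdd (aestronglyMeasurable_discriminator hp hphat)
    (ae_of_all _ fun x => abs_discriminator_le x)

end PRDivergence

open PRDivergence in
theorem PR_optimal_discriminator_attains_general
    {X : Type*} [MeasurableSpace X] (μ : Measure X)
    (p phat : X → ℝ)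
    (hpint : ∫ x, p x ∂μ = 1) (hphatint : ∫ x, phat x ∂μ = 1)
    (hphatpos : ∀ᵐ x ∂μ, 0 < phat x)
    (lam : ℝ) (hlam : 0 < lam)
    (T : X → ℝ) (hT : ∀ x, T x = if phat x ≤ lam * p x then lam else 0) :
    (∫ x, p x * T x ∂μ) -
        (∫ x, phat x * (T x / lam + max lam 1 - 1) ∂μ) =
      ∫ x, phat x * (max (lam * (p x / phat x)) 1 - max lam 1) ∂μ := by
  obtain rfl : T = discriminator lam p phat := funext hT
  have hpI : Integrable p μ := .of_integral_ne_zero (by simp [hpint])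
  have hphatI : Integrable phat μ := .of_integral_ne_zero (by simp [hphatint])
  have hp := hpI.aemeasurable
  have hphat := hphatI.aemeasurable
  have hpT := integrable_mul_discriminator (lam := lam) hpI hp hphat
  have hphatT := integrable_mul_discriminator (lam := lam) hphatI hp hphat
  have hconj : Integrable (fun x => phat x * (discriminator lam p phat x / lam + max lam 1 - 1)) μ :=
    ((hphatT.div_const lam).add (hphatI.const_mul (max lam 1 - 1))).congr
      (ae_of_all _ fun x => by simp only [Pi.add_apply]; ring)
  rw [← integral_sub hpT hconj]
  refine integral_congr_ae ?_
  filter_upwards [hphatpos] with x hx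
  exact mul_discriminator_sub_eq hlam.ne' hx

/-- The discriminator `T(x) = λ·1{λ p(x) ≥ p̂(x)}` attains the PR-divergence in
the dual form. -/
theorem PR_optimal_discriminator_attains
    {X : Type*} [MeasurableSpace X] (μ : Measure X) [SigmaFinite μ]
    (p phat : X → ℝ) (hp : Measurable p) (hphat : Measurable phat)
    (hp0 : ∀ x, 0 ≤ p x) (hphat0 : ∀ x, 0 ≤ phat x)
    (hpint : ∫ x, p x ∂μ = 1) (hphatint : ∫ x, phat x ∂μ = 1)
    (hphatpos : ∀ᵐ x ∂μ, 0 < phat x)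
    (lam : ℝ) (hlam : 0 < lam)
    (T : X → ℝ) (hT : ∀ x, T x = if phat x ≤ lam * p x then lam else 0) :
    (∫ x, p x * T x ∂μ) -
        (∫ x, phat x * (T x / lam + max lam 1 - 1) ∂μ) =
      ∫ x, phat x * (max (lam * (p x / phat x)) 1 - max lam 1) ∂μ :=
  PR_optimal_discriminator_attains_general μ p phat hpint hphatint hphatpos lam hlam T hT
end
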